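/- arXiv:1910.10181 — 2 statements merged into one kernel-verified Lean document; each statement's English description precedes it below -/
import Mathlib

section
/- Let F = f(η) be an essentially bounded real random variable. Then the map (ω, z) ↦ D_z⁺F(ω) belongs to L^∞(P ⊗ ν); more precisely, for every t ∈ ℝ with P(F ≥ t) = 0 one has (P ⊗ ν)({(ω, z) : F(ω) + D_z⁺F(ω) ≥ t}) = 0, and consequently |D_z⁺F| ≤ 2·esssup|F| for P ⊗ ν-almost every (ω, z). -/
open MeasureTheory ProbabilityTheory Filter Real Topology

noncomputable section

namespace StablePoisson

variable {Ω : Type*} [MeasurableSpace Ω] {Z : Type*} [MeasurableSpace Z]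

/-- The add-one operator `D_z⁺F` for `F = f(η)`, computed through the representative `f`. -/
def addD (f : Measure Z → ℝ) (η : Ω → Measure Z) (ω : Ω) (z : Z) : ℝ :=
  f (η ω + Measure.dirac z) - f (η ω)

/-- The drop-one operator `D_z⁻F` for `F = f(η)`. -/
def dropD (f : Measure Z → ℝ) (η : Ω → Measure Z) (ω : Ω) (z : Z) : ℝ :=
  if 1 ≤ η ω {z} then f (η ω) - f (η ω - Measure.dirac z) else 0

/-- The representative `(m, z) ↦ f(m + δ_z) - f(m)` of the Malliavin derivative `DF`. -/
def Drep (f : Measure Z → ℝ) : Measure Z → Z → ℝ :=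
  fun m z => f (m + Measure.dirac z) - f m

/-- A Poisson point process with intensity measure `ν`. -/
structure IsPoissonPP (P : Measure Ω) (ν : Measure Z) (η : Ω → Measure Z) : Prop where
  measurable : Measurable η
  indepFamily : ∀ (n : ℕ) (B : Fin n → Set Z), (∀ i, MeasurableSet (B i)) →
    (Pairwise fun i j => Disjoint (B i) (B j)) →
    iIndepFun (fun i ω => η ω (B i)) P
  poissonLaw : ∀ B : Set Z, MeasurableSet B → ν B < ⊤ → ∀ k : ℕ,
    P {ω | η ω B = k} =
      ENNReal.ofReal (Real.exp (-(ν B).toReal) * (ν B).toReal ^ k / (Nat.factorial k))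

/-- Membership in `dom D`, through a representative. -/
structure MemDomD (P : Measure Ω) (ν : Measure Z) (η : Ω → Measure Z)
    (f : Measure Z → ℝ) : Prop where
  meas : Measurable f
  memL2 : MemLp (fun ω => f (η ω)) 2 P
  energyFin : (∫⁻ ω, ∫⁻ z, ENNReal.ofReal ((addD f η ω z) ^ 2) ∂ν ∂P) < ⊤

/-- `u ∈ dom δ` (with representative `u : Measure Z → Z → ℝ`) and `F = δ u`. -/
structure IsSkorokhod (P : Measure Ω) (ν : Measure Z) (η : Ω → Measure Z)
    (u : Measure Z → Z → ℝ) (F : Ω → ℝ) : Prop where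
  meas : Measurable (Function.uncurry u)
  memL2 : MemLp (fun p : Ω × Z => u (η p.1) p.2) 2 (P.prod ν)
  FmemL2 : MemLp F 2 P
  duality : ∀ f : Measure Z → ℝ, MemDomD P ν η f →
    ∫ ω, f (η ω) * F ω ∂P = ∫ ω, ∫ z, u (η ω) z * addD f η ω z ∂ν ∂P

/-- The bracket `[u, v]_ν = ∫ u(z) v(z) ν(dz)`. -/
def bracketNu (ν : Measure Z) (η : Ω → Measure Z) (u v : Measure Z → Z → ℝ) (ω : Ω) : ℝ :=
  ∫ z, u (η ω) z * v (η ω) z ∂ν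

/-- The bracket `[u, v]_η = ∫ (1 - D_z⁻)u(z) (1 - D_z⁻)v(z) η(dz)`. -/
def bracketEta (η : Ω → Measure Z) (u v : Measure Z → Z → ℝ) (ω : Ω) : ℝ :=
  ∫ z, u (η ω - Measure.dirac z) z * v (η ω - Measure.dirac z) z ∂(η ω)

/-- The energy bracket `[u, v]_Γ = ½ [u, v]_ν + ½ [u, v]_η`. -/
def bracketGamma (ν : Measure Z) (η : Ω → Measure Z) (u v : Measure Z → Z → ℝ) (ω : Ω) : ℝ :=
  (bracketNu ν η u v ω + bracketEta η u v ω) / 2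

/-- A test function: measurable, nonnegative, with `ν(ψ > 0) < ∞`. -/
def IsTestFun (ν : Measure Z) (ψ : Z → ℝ) : Prop :=
  Measurable ψ ∧ (∀ z, 0 ≤ ψ z) ∧ ν {z | 0 < ψ z} < ⊤

/-- `e^{-m(ψ)}`, with the convention that it vanishes when `m(ψ) = ∞`. -/
def expInt (ψ : Z → ℝ) (m : Measure Z) : ℝ :=
  if (∫⁻ z, ENNReal.ofReal (ψ z) ∂m) = ⊤ then 0
  else Real.exp (-(∫⁻ z, ENNReal.ofReal (ψ z) ∂m).toReal)

/-- Convergence in `L¹(P)`. -/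
def TendstoL1 (P : Measure Ω) (f : ℕ → Ω → ℝ) (g : Ω → ℝ) : Prop :=
  Tendsto (fun n => ∫⁻ ω, ENNReal.ofReal |f n ω - g ω| ∂P) atTop (𝓝 0)

/-- Stable convergence with respect to the σ-algebra `W`: joint convergence in distribution
with every bounded `W`-measurable real random variable. -/
def StablyTendsto {E : Type*} [TopologicalSpace E] (P : Measure Ω) (W : MeasurableSpace Ω)
    (F : ℕ → Ω → E) (Flim : Ω → E) : Prop :=
  ∀ X : Ω → ℝ, Measurable[W] X → (∃ C, ∀ ω, |X ω| ≤ C) →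
    ∀ g : BoundedContinuousFunction (E × ℝ) ℝ,
      Tendsto (fun n => ∫ ω, g (F n ω, X ω) ∂P) atTop (𝓝 (∫ ω, g (Flim ω, X ω) ∂P))

/-- The `ℓ²`-norm of a finite real vector. -/
def vnorm {d : ℕ} (x : Fin d → ℝ) : ℝ := Real.sqrt (∑ i, x i ^ 2)

/-- First-order partial derivative. -/
def pd {d : ℕ} (φ : (Fin d → ℝ) → ℝ) (i : Fin d) (x : Fin d → ℝ) : ℝ :=
  fderiv ℝ φ x (Pi.single i 1)

/-- Second-order partial derivative. -/
def pd2 {d : ℕ} (φ : (Fin d → ℝ) → ℝ) (i j : Fin d) (x : Fin d → ℝ) : ℝ :=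
  pd (pd φ j) i x

/-- Third-order partial derivative. -/
def pd3 {d : ℕ} (φ : (Fin d → ℝ) → ℝ) (i j k : Fin d) (x : Fin d → ℝ) : ℝ :=
  pd (pd2 φ j k) i x

/-- The remainder tensor `R̂(x, h, ∇φ)_{ijk} = ∫₀¹∫₀¹ α ∂³_{ijk}φ(x + αβh) dα dβ`. -/
def Rhat {d : ℕ} (φ : (Fin d → ℝ) → ℝ) (x h : Fin d → ℝ) (i j k : Fin d) : ℝ :=
  ∫ β in (0:ℝ)..1, ∫ α in (0:ℝ)..1, α * pd3 φ i j k (x + (α * β) • h)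

/-- The remainder tensor `Ř(x, h, ∇φ)_{ijk} = ∫₀¹∫₀¹ α ∂³_{ijk}φ(x - αβh) dα dβ`. -/
def Rcheck {d : ℕ} (φ : (Fin d → ℝ) → ℝ) (x h : Fin d → ℝ) (i j k : Fin d) : ℝ :=
  ∫ β in (0:ℝ)..1, ∫ α in (0:ℝ)..1, α * pd3 φ i j k (x - (α * β) • h)

/-- Monge–Kantorovich (Wasserstein-1) distance between the laws of two real random
variables, via the dual (Kantorovich) formulation. -/
def dW1 {Ω₁ Ω₂ : Type*} [MeasurableSpace Ω₁] [MeasurableSpace Ω₂]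
    (P₁ : Measure Ω₁) (P₂ : Measure Ω₂) (X : Ω₁ → ℝ) (Y : Ω₂ → ℝ) : ℝ :=
  sSup {r | ∃ φ : ℝ → ℝ, LipschitzWith 1 φ ∧
    r = (∫ ω, φ (X ω) ∂P₁) - ∫ ω, φ (Y ω) ∂P₂}

/-- `ℓ²` norm of the gradient. -/
def tnorm1 {d : ℕ} (φ : (Fin d → ℝ) → ℝ) (x : Fin d → ℝ) : ℝ :=
  Real.sqrt (∑ i, pd φ i x ^ 2)

/-- `ℓ²` norm of the Hessian. -/
def tnorm2 {d : ℕ} (φ : (Fin d → ℝ) → ℝ) (x : Fin d → ℝ) : ℝ :=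
  Real.sqrt (∑ i, ∑ j, pd2 φ i j x ^ 2)

/-- `ℓ²` norm of the third derivative tensor. -/
def tnorm3 {d : ℕ} (φ : (Fin d → ℝ) → ℝ) (x : Fin d → ℝ) : ℝ :=
  Real.sqrt (∑ i, ∑ j, ∑ k, pd3 φ i j k x ^ 2)

/-- The distance `d₃` of Peccati–Zheng. -/
def d3dist {d : ℕ} {Ω₁ Ω₂ : Type*} [MeasurableSpace Ω₁] [MeasurableSpace Ω₂]
    (P₁ : Measure Ω₁) (P₂ : Measure Ω₂) (X : Ω₁ → Fin d → ℝ) (Y : Ω₂ → Fin d → ℝ) : ℝ :=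
  sSup {r | ∃ φ : (Fin d → ℝ) → ℝ, ContDiff ℝ 3 φ ∧ (∀ x, tnorm2 φ x ≤ 1) ∧
    (∀ x, tnorm3 φ x ≤ 1) ∧ r = (∫ ω, φ (X ω) ∂P₁) - ∫ ω, φ (Y ω) ∂P₂}

end StablePoisson


/-!
By the Mecke formula `E ∫ g(η, z) η(dz) = ∫ E g(η + δ_z, z) ν(dz)`, the law of `η + δ_z` under
`P ⊗ ν` is absolutely continuous with respect to the law of `η`. Hence a bound on `f(η)` holding
`P`-almost surely also holds for `f(η + δ_z)`, `P ⊗ ν`-almost surely, and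
`|D_z⁺F| ≤ |f(η + δ_z)| + |f(η)| ≤ 2 ‖F‖_∞`.

The Mecke formula is proved for the intensity restricted to a set `B` of finite measure, by
comparing both sides on cylinder events `{μ | μ(B_i) ∈ A_i}`. Splitting `B, B_1, …, B_n` into the
cells of their Venn diagram turns both sides into sums over independent Poisson counts, where the
formula reduces to the identity `(k + 1) p_λ(k + 1) = λ p_λ(k)` for Poisson weights.
-/

open Set Function
open scoped ENNReal NNReal

namespace StablePoisson

lemma poissonMeasure_succ_mul (r : ℝ≥0) (k : ℕ) :
    ((k + 1 : ℕ) : ℝ≥0∞) * poissonMeasure r {k + 1} = r * poissonMeasure r {k} := by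
  rw [poissonMeasure_singleton, poissonMeasure_singleton, ← ENNReal.ofReal_natCast,
    ← ENNReal.ofReal_coe_nnreal, ← ENNReal.ofReal_mul (by positivity),
    ← ENNReal.ofReal_mul (by positivity)]
  congr 1
  rw [Nat.factorial_succ, pow_succ]
  push_cast
  field_simp

lemma tsum_poissonMeasure_singleton (r : ℝ≥0) : ∑' k, poissonMeasure r {k} = 1 := by
  rw [← measure_iUnion (fun i j h => disjoint_singleton.2 h) fun _ => measurableSet_singleton _,
    iUnion_singleton_eq_range, range_id', measure_univ]

lemma tsum_mul_prod_poissonMeasure_add_single {ι : Type*} [Fintype ι] [DecidableEq ι]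
    (r : ι → ℝ≥0) (i₀ : ι) (g : (ι → ℕ) → ℝ≥0∞) :
    (r i₀ : ℝ≥0∞) * ∑' k : ι → ℕ, g (k + Pi.single i₀ 1) * ∏ i, poissonMeasure (r i) {k i}
      = ∑' k : ι → ℕ, (k i₀ : ℝ≥0∞) * g k * ∏ i, poissonMeasure (r i) {k i} := by
  have hsupp : (support fun k : ι → ℕ => (k i₀ : ℝ≥0∞) * g k * ∏ i, poissonMeasure (r i) {k i})
      ⊆ range (· + (Pi.single i₀ 1 : ι → ℕ)) := by
    intro k hk
    have hk₀ : 1 ≤ k i₀ := Nat.one_le_iff_ne_zero.2 fun h => hk (by simp [h])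
    refine ⟨k - Pi.single i₀ 1, tsub_add_cancel_of_le fun i => ?_⟩
    rcases eq_or_ne i i₀ with rfl | hi <;> simp [*]
  rw [← (add_left_injective _).tsum_eq hsupp, ← ENNReal.tsum_mul_left]
  refine tsum_congr fun k => ?_
  have hi₀ : (k + Pi.single i₀ 1 : ι → ℕ) i₀ = k i₀ + 1 := by simp
  have hrest : ∀ i ∈ Finset.univ.erase i₀, (k + Pi.single i₀ 1 : ι → ℕ) i = k i := fun i hi => by
    simp [Finset.ne_of_mem_erase hi]
  simp only [← Finset.mul_prod_erase _ _ (Finset.mem_univ i₀), hi₀,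
    Finset.prod_congr rfl fun i hi => congrArg (fun n => poissonMeasure (r i) {n}) (hrest i hi)]
  generalize g (k + Pi.single i₀ 1) = a
  generalize ∏ i ∈ Finset.univ.erase i₀, poissonMeasure (r i) {k i} = b
  calc (r i₀ : ℝ≥0∞) * (a * (poissonMeasure (r i₀) {k i₀} * b))
      = (r i₀ * poissonMeasure (r i₀) {k i₀}) * (a * b) := by ring
    _ = _ := by rw [← poissonMeasure_succ_mul]; ring

section VennCell

variable {α ι : Type*} (C : ι → Set α)

def vennCell (s : ι → Bool) : Set α := ⋂ i, if s i then C i else (C i)ᶜ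

variable {C}

lemma mem_vennCell {s : ι → Bool} {z : α} : z ∈ vennCell C s ↔ ∀ i, (z ∈ C i ↔ s i = true) := by
  simp only [vennCell, mem_iInter]
  refine forall_congr' fun i => ?_
  cases s i <;> simp

lemma measurableSet_vennCell [MeasurableSpace α] [Countable ι] (hC : ∀ i, MeasurableSet (C i))
    (s : ι → Bool) : MeasurableSet (vennCell C s) :=
  .iInter fun i => by cases s i <;> simp [hC i]

variable (C) in
lemma pairwise_disjoint_vennCell : Pairwise (Disjoint on vennCell C) := fun _ _ hst =>
  disjoint_left.2 fun _ hs ht => hst <| funext fun i =>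
    Bool.eq_iff_iff.2 ((mem_vennCell.1 hs i).symm.trans (mem_vennCell.1 ht i))

lemma vennCell_subset {s : ι → Bool} {i : ι} (hi : s i = true) : vennCell C s ⊆ C i :=
  fun _ hz => (mem_vennCell.1 hz i).2 hi

lemma measure_vennCell_ne_top [MeasurableSpace α] {μ : Measure α} (hμC : ∀ i, μ (C i) ≠ ∞)
    (s : {s : ι → Bool // ∃ i, s i = true}) : μ (vennCell C s.1) ≠ ∞ :=
  let ⟨i, hi⟩ := s.2
  ne_top_of_le_ne_top (hμC i) (measure_mono (vennCell_subset hi))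

variable [Fintype ι] [DecidableEq ι]

variable (C) in
lemma biUnion_vennCell (i : ι) :
    ⋃ s ∈ Finset.univ.filter (fun s : {s : ι → Bool // ∃ j, s j = true} => s.1 i),
      vennCell C s.1 = C i := by
  classical
  ext z
  simp only [mem_iUnion, Finset.mem_filter, Finset.mem_univ, true_and, exists_prop]
  refine ⟨fun ⟨s, hsi, hz⟩ => vennCell_subset hsi hz, fun hz => ?_⟩
  exact ⟨⟨fun j => decide (z ∈ C j), i, by simpa using hz⟩, by simpa using hz,
    mem_vennCell.2 fun j => by simp⟩

lemma measure_eq_sum_vennCell [MeasurableSpace α] (hC : ∀ i, MeasurableSet (C i)) (μ : Measure α)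
    (i : ι) : μ (C i) = ∑ s ∈ Finset.univ.filter
      (fun s : {s : ι → Bool // ∃ j, s j = true} => s.1 i), μ (vennCell C s.1) := by
  conv_lhs => rw [← biUnion_vennCell C i]
  exact measure_biUnion_finset
    (((pairwise_disjoint_vennCell C).comp_of_injective Subtype.val_injective).set_pairwise _)
    fun s _ => measurableSet_vennCell hC s.1

lemma setLIntegral_eq_sum_vennCell [MeasurableSpace α] (hC : ∀ i, MeasurableSet (C i))
    (μ : Measure α) (g : α → ℝ≥0∞) (i : ι) :
    ∫⁻ z in C i, g z ∂μ = ∑ s ∈ Finset.univ.filter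
      (fun s : {s : ι → Bool // ∃ j, s j = true} => s.1 i), ∫⁻ z in vennCell C s.1, g z ∂μ := by
  conv_lhs => rw [← biUnion_vennCell C i]
  exact lintegral_biUnion_finset
    (((pairwise_disjoint_vennCell C).comp_of_injective Subtype.val_injective).set_pairwise _)
    (fun s _ => measurableSet_vennCell hC s.1) g

end VennCell

section Cylinders

variable {Z : Type*} [MeasurableSpace Z]

def finiteCylinders (ν : Measure Z) : Set (Set (Measure Z)) :=
  {T | ∃ (ι : Type) (_ : Fintype ι) (B : ι → Set Z) (A : ι → Set ℝ≥0∞),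
    (∀ i, MeasurableSet (B i)) ∧ (∀ i, ν (B i) ≠ ∞) ∧ (∀ i, MeasurableSet (A i)) ∧
    T = {μ | ∀ i, μ (B i) ∈ A i}}

lemma measurableSet_cylinder {ι : Type*} [Countable ι] {B : ι → Set Z} {A : ι → Set ℝ≥0∞}
    (hB : ∀ i, MeasurableSet (B i)) (hA : ∀ i, MeasurableSet (A i)) :
    MeasurableSet {μ : Measure Z | ∀ i, μ (B i) ∈ A i} := by
  rw [ofPred_forall]
  exact .iInter fun i => Measure.measurable_coe (hB i) (hA i)

lemma isPiSystem_finiteCylinders (ν : Measure Z) : IsPiSystem (finiteCylinders ν) := by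
  rintro _ ⟨ι, _, B, A, hB, hνB, hA, rfl⟩ _ ⟨ι', _, B', A', hB', hνB', hA', rfl⟩ -
  refine ⟨ι ⊕ ι', inferInstance, Sum.elim B B', Sum.elim A A', Sum.forall.2 ⟨hB, hB'⟩,
    Sum.forall.2 ⟨hνB, hνB'⟩, Sum.forall.2 ⟨hA, hA'⟩, ?_⟩
  ext μ
  simp [Sum.forall]

lemma generateFrom_finiteCylinders (ν : Measure Z) [SigmaFinite ν] :
    MeasurableSpace.generateFrom (finiteCylinders ν) = Measure.instMeasurableSpace := by
  refine le_antisymm (MeasurableSpace.generateFrom_le ?_) ?_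
  · rintro _ ⟨ι, _, B, A, hB, -, hA, rfl⟩
    exact measurableSet_cylinder hB hA
  have heval {B : Set Z} (hB : MeasurableSet B) (hνB : ν B ≠ ∞) :
      Measurable[MeasurableSpace.generateFrom (finiteCylinders ν)] fun μ : Measure Z => μ B :=
    fun A hA => MeasurableSpace.measurableSet_generateFrom ⟨Unit, inferInstance, fun _ => B,
      fun _ => A, fun _ => hB, fun _ => hνB, fun _ => hA, by ext; simp⟩
  have hid : Measurable[MeasurableSpace.generateFrom (finiteCylinders ν)]
      (id : Measure Z → Measure Z) := by
    refine @Measure.measurable_of_measurable_coe _ _ _ (_) id fun B hB => ?_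
    have hsup (μ : Measure Z) : μ B = ⨆ n, μ (B ∩ spanningSets ν n) := by
      rw [← (monotone_const.inter (monotone_spanningSets ν)).measure_iUnion, ← inter_iUnion,
        iUnion_spanningSets, inter_univ]
    simp only [id, hsup]
    exact .iSup fun n => heval (hB.inter (measurableSet_spanningSets ν n))
      ((measure_mono inter_subset_right).trans_lt (measure_spanningSets_lt_top ν n)).ne
  simpa [MeasurableSpace.comap_id] using hid.comap_le

end Cylinders

namespace IsPoissonPP

variable {Ω Z : Type*} [MeasurableSpace Ω] [MeasurableSpace Z] {P : Measure Ω} {ν : Measure Z}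
  {η : Ω → Measure Z} {ι : Type*} [Fintype ι] {D : ι → Set Z}

lemma measurable_eval (hη : IsPoissonPP P ν η) {B : Set Z} (hB : MeasurableSet B) :
    Measurable fun ω => η ω B :=
  (Measure.measurable_coe hB).comp hη.measurable

lemma measurable_add_dirac (hη : IsPoissonPP P ν η) :
    Measurable fun q : Ω × Z => η q.1 + Measure.dirac q.2 :=
  (hη.measurable.comp measurable_fst).add (Measure.measurable_dirac.comp measurable_snd)

lemma measure_eval_eq_poissonMeasure (hη : IsPoissonPP P ν η) {B : Set Z} (hB : MeasurableSet B)
    (hνB : ν B ≠ ∞) (k : ℕ) :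
    P {ω | η ω B = k} = poissonMeasure (ν B).toNNReal {k} := by
  rw [poissonMeasure_singleton]
  exact hη.poissonLaw B hB hνB.lt_top k

lemma measure_counts_eq_prod (hη : IsPoissonPP P ν η) (hD : ∀ i, MeasurableSet (D i))
    (hdisj : Pairwise (Disjoint on D)) (hνD : ∀ i, ν (D i) ≠ ∞) (k : ι → ℕ) :
    P {ω | ∀ i, η ω (D i) = k i} = ∏ i, poissonMeasure (ν (D i)).toNNReal {k i} := by
  let e := (Fintype.equivFin ι).symm
  have hind := hη.indepFamily _ (D ∘ e) (fun j => hD (e j)) (hdisj.comp_of_injective e.injective)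
  have hprod := hind.meas_iInter (s := fun j => {ω | η ω (D (e j)) = k (e j)})
    fun j => ⟨{(k (e j) : ℝ≥0∞)}, measurableSet_singleton _, rfl⟩
  rw [ofPred_forall, ← e.surjective.iInter_comp, hprod, ← e.prod_comp]
  exact Finset.prod_congr rfl fun j _ => hη.measure_eval_eq_poissonMeasure (hD _) (hνD _) _

variable [IsProbabilityMeasure P]

lemma ae_eval_eq_natCast (hη : IsPoissonPP P ν η) {B : Set Z}
    (hB : MeasurableSet B) (hνB : ν B ≠ ∞) :
    ∀ᵐ ω ∂P, ∃ k : ℕ, η ω B = k := by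
  have hmeas (k : ℕ) : MeasurableSet {ω | η ω B = k} :=
    hη.measurable_eval hB (measurableSet_singleton _)
  have hdisj : Pairwise (Disjoint on fun k : ℕ => {ω | η ω B = k}) := fun k k' h =>
    disjoint_left.2 fun ω hk hk' => h (Nat.cast_injective (hk.symm.trans hk'))
  have hU : MeasurableSet {ω | ∃ k : ℕ, η ω B = k} := by
    rw [ofPred_exists]
    exact .iUnion hmeas
  rw [ae_iff_measure_eq hU.nullMeasurableSet, ofPred_exists, measure_iUnion hdisj hmeas,
    measure_univ]
  simp_rw [hη.measure_eval_eq_poissonMeasure hB hνB]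
  exact tsum_poissonMeasure_singleton _

lemma lintegral_comp_counts (hη : IsPoissonPP P ν η)
    (hD : ∀ i, MeasurableSet (D i)) (hdisj : Pairwise (Disjoint on D)) (hνD : ∀ i, ν (D i) ≠ ∞)
    (Φ : (ι → ℝ≥0∞) → ℝ≥0∞) :
    ∫⁻ ω, Φ (fun i => η ω (D i)) ∂P
      = ∑' k : ι → ℕ, Φ (fun i => k i) * ∏ i, poissonMeasure (ν (D i)).toNNReal {k i} := by
  set E : (ι → ℕ) → Set Ω := fun k => {ω | ∀ i, η ω (D i) = k i}
  have hE (k : ι → ℕ) : MeasurableSet (E k) := by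
    simp only [E, ofPred_forall]
    exact .iInter fun i => hη.measurable_eval (hD i) (measurableSet_singleton _)
  have hEdisj : Pairwise (Disjoint on E) := fun k k' h => disjoint_left.2 fun ω hk hk' =>
    h (funext fun i => Nat.cast_injective ((hk i).symm.trans (hk' i)))
  have hEfull : ⋃ k, E k =ᵐ[P] univ := by
    refine eventuallyEq_univ.2 ?_
    filter_upwards [ae_all_iff.2 fun i => hη.ae_eval_eq_natCast (hD i) (hνD i)] with ω hω
    choose k hk using hω
    exact mem_iUnion.2 ⟨k, hk⟩
  calc ∫⁻ ω, Φ (fun i => η ω (D i)) ∂P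
      = ∑' k, ∫⁻ ω in E k, Φ (fun i => η ω (D i)) ∂P := by
        rw [← lintegral_iUnion hE hEdisj, setLIntegral_congr hEfull, setLIntegral_univ]
    _ = ∑' k, Φ (fun i => k i) * P (E k) := tsum_congr fun k => by
        rw [setLIntegral_congr_fun (hE k) fun ω hω => congrArg Φ (funext hω), setLIntegral_const]
    _ = _ := by simp_rw [E, hη.measure_counts_eq_prod hD hdisj hνD]

lemma lintegral_comp_counts_add_single [DecidableEq ι]
    (hη : IsPoissonPP P ν η) (hD : ∀ i, MeasurableSet (D i)) (hdisj : Pairwise (Disjoint on D))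
    (hνD : ∀ i, ν (D i) ≠ ∞) (i₀ : ι) (Φ : (ι → ℝ≥0∞) → ℝ≥0∞) :
    ν (D i₀) * ∫⁻ ω, Φ ((fun i => η ω (D i)) + Pi.single i₀ 1) ∂P
      = ∫⁻ ω, η ω (D i₀) * Φ (fun i => η ω (D i)) ∂P := by
  have hcast (k : ι → ℕ) : (fun i => ((k + Pi.single i₀ 1 : ι → ℕ) i : ℝ≥0∞))
      = (fun i => (k i : ℝ≥0∞)) + Pi.single i₀ 1 := by
    funext i
    rcases eq_or_ne i i₀ with rfl | hi <;> simp [*]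
  have hshift := hη.lintegral_comp_counts hD hdisj hνD fun x => Φ (x + Pi.single i₀ 1)
  have hbias := hη.lintegral_comp_counts hD hdisj hνD fun x => x i₀ * Φ x
  simp only at hshift hbias
  rw [hshift, hbias, ← ENNReal.coe_toNNReal (hνD i₀),
    ← tsum_mul_prod_poissonMeasure_add_single _ i₀ fun k => Φ fun i => k i]
  simp only [hcast]

lemma setLIntegral_lintegral_add_dirac_counts [DecidableEq ι] (hη : IsPoissonPP P ν η)
    (hD : ∀ i, MeasurableSet (D i)) (hdisj : Pairwise (Disjoint on D)) (hνD : ∀ i, ν (D i) ≠ ∞)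
    (i₀ : ι)
    (Φ : (ι → ℝ≥0∞) → ℝ≥0∞) :
    ∫⁻ z in D i₀, ∫⁻ ω, Φ (fun i => (η ω + Measure.dirac z) (D i)) ∂P ∂ν
      = ∫⁻ ω, η ω (D i₀) * Φ (fun i => η ω (D i)) ∂P := by
  have hcounts {z : Z} (hz : z ∈ D i₀) (ω : Ω) :
      (fun i => (η ω + Measure.dirac z) (D i)) = (fun i => η ω (D i)) + Pi.single i₀ 1 := by
    funext i
    rw [Measure.add_apply, Measure.dirac_apply' _ (hD i)]
    rcases eq_or_ne i i₀ with rfl | hi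
    · simp [hz]
    · simp [hi, disjoint_right.1 (hdisj hi) hz]
  calc _ = ∫⁻ _ in D i₀, ∫⁻ ω, Φ ((fun i => η ω (D i)) + Pi.single i₀ 1) ∂P ∂ν :=
        setLIntegral_congr_fun (hD i₀) fun z hz => by simp only [hcounts hz]
    _ = _ := by
        rw [setLIntegral_const, mul_comm, hη.lintegral_comp_counts_add_single hD hdisj hνD]

lemma setLIntegral_lintegral_add_dirac_vennCell_counts [DecidableEq ι] {C : ι → Set Z}
    (hη : IsPoissonPP P ν η) (hC : ∀ i, MeasurableSet (C i))
    (hνC : ∀ i, ν (C i) ≠ ∞) (i₀ : ι)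
    {Φ : ({s : ι → Bool // ∃ i, s i = true} → ℝ≥0∞) → ℝ≥0∞} (hΦ : Measurable Φ) :
    ∫⁻ z in C i₀, ∫⁻ ω, Φ (fun s => (η ω + Measure.dirac z) (vennCell C s.1)) ∂P ∂ν
      = ∫⁻ ω, η ω (C i₀) * Φ (fun s => η ω (vennCell C s.1)) ∂P := by
  have hD (s : {s : ι → Bool // ∃ i, s i = true}) := measurableSet_vennCell hC s.1
  have hdisj := (pairwise_disjoint_vennCell C).comp_of_injective
    (Subtype.val_injective (p := fun s : ι → Bool => ∃ i, s i = true))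
  have hcounts : Measurable fun ω (s : {s : ι → Bool // ∃ i, s i = true}) => η ω (vennCell C s.1) :=
    measurable_pi_lambda _ fun s => hη.measurable_eval (hD s)
  calc _ = ∑ s ∈ Finset.univ.filter (fun s : {s : ι → Bool // ∃ i, s i = true} => s.1 i₀),
        ∫⁻ ω, η ω (vennCell C s.1) * Φ (fun s => η ω (vennCell C s.1)) ∂P := by
        rw [setLIntegral_eq_sum_vennCell hC]
        exact Finset.sum_congr rfl fun s _ => hη.setLIntegral_lintegral_add_dirac_counts hD hdisj
          (measure_vennCell_ne_top hνC) s Φ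
    _ = _ := by
        rw [← lintegral_finsetSum
          (f := fun s ω => η ω (vennCell C s.1) * Φ (fun s => η ω (vennCell C s.1))) _
          fun s _ => (hη.measurable_eval (hD s)).mul (hΦ.comp hcounts)]
        simp_rw [← Finset.sum_mul, ← measure_eq_sum_vennCell hC]

lemma map_prod_restrict_add_dirac_apply_cylinder (hη : IsPoissonPP P ν η) {B₀ : Set Z}
    (hB₀ : MeasurableSet B₀) (hνB₀ : ν B₀ ≠ ∞) {T : Set (Measure Z)}
    (hT : T ∈ finiteCylinders ν) :
    (P.prod (ν.restrict B₀)).map (fun q => η q.1 + Measure.dirac q.2) T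
      = (P.withDensity fun ω => η ω B₀).map η T := by
  classical
  obtain ⟨ι, _, B, A, hB, hνB, hA, rfl⟩ := hT
  set T := {μ : Measure Z | ∀ i, μ (B i) ∈ A i}
  have hTm : MeasurableSet T := measurableSet_cylinder hB hA
  let C : Option ι → Set Z := fun o => o.elim B₀ B
  have hC : ∀ o, MeasurableSet (C o) := Option.forall.2 ⟨hB₀, hB⟩
  have hνC : ∀ o, ν (C o) ≠ ∞ := Option.forall.2 ⟨hνB₀, hνB⟩
  let S := {s : Option ι → Bool // ∃ o, s o = true}
  let Φ : (S → ℝ≥0∞) → ℝ≥0∞ :=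
    indicator {x | ∀ i, ∑ s ∈ Finset.univ.filter (fun s : S => s.1 (some i)), x s ∈ A i} 1
  have hΦm : Measurable Φ := by
    refine measurable_one.indicator ?_
    rw [ofPred_forall]
    exact .iInter fun i => (Finset.measurable_sum _ fun s _ => measurable_pi_apply s) (hA i)
  have hΦ (μ : Measure Z) : Φ (fun s : S => μ (vennCell C s.1)) = T.indicator 1 μ := by
    have hmem : μ ∈ T ↔
        ∀ i, ∑ s ∈ Finset.univ.filter (fun s : S => s.1 (some i)), μ (vennCell C s.1) ∈ A i :=
      forall_congr' fun i => by rw [← measure_eq_sum_vennCell hC μ (some i)]; rfl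
    simp only [Φ, indicator_apply, mem_ofPred_eq, hmem, Pi.one_apply]
  have : IsFiniteMeasure (ν.restrict B₀) := isFiniteMeasure_restrict.2 hνB₀
  rw [Measure.map_apply hη.measurable_add_dirac hTm, Measure.map_apply hη.measurable hTm,
    withDensity_apply _ (hη.measurable hTm),
    Measure.prod_apply_symm (hη.measurable_add_dirac hTm)]
  calc ∫⁻ z, P ((fun ω => (ω, z)) ⁻¹' ((fun q : Ω × Z => η q.1 + Measure.dirac q.2) ⁻¹' T))
        ∂ν.restrict B₀
      = ∫⁻ z in C none, ∫⁻ ω, Φ (fun s => (η ω + Measure.dirac z) (vennCell C s.1)) ∂P ∂ν := by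
        refine lintegral_congr fun z => ?_
        simp_rw [hΦ]
        exact (lintegral_indicator_one
          (hη.measurable_add_dirac.comp measurable_prodMk_right hTm)).symm
    _ = ∫⁻ ω, η ω B₀ * T.indicator 1 (η ω) ∂P := by
        exact (hη.setLIntegral_lintegral_add_dirac_vennCell_counts hC hνC none hΦm).trans
          (lintegral_congr fun ω => by rw [hΦ]; rfl)
    _ = ∫⁻ ω in η ⁻¹' T, η ω B₀ ∂P := by
        rw [← lintegral_indicator (hη.measurable hTm)]
        refine lintegral_congr fun ω => ?_
        by_cases hω : η ω ∈ T <;> simp [hω]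

theorem map_prod_restrict_add_dirac [SigmaFinite ν] (hη : IsPoissonPP P ν η) {B : Set Z}
    (hB : MeasurableSet B) (hνB : ν B ≠ ∞) :
    (P.prod (ν.restrict B)).map (fun q => η q.1 + Measure.dirac q.2)
      = (P.withDensity fun ω => η ω B).map η := by
  have : IsFiniteMeasure (ν.restrict B) := isFiniteMeasure_restrict.2 hνB
  have hcyl := fun T (hT : T ∈ finiteCylinders ν) =>
    hη.map_prod_restrict_add_dirac_apply_cylinder hB hνB hT
  -- The total masses agree: `univ` is the cylinder with no constraint.
  refine ext_of_generate_finite _ (generateFrom_finiteCylinders ν).symm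
    (isPiSystem_finiteCylinders ν) hcyl (hcyl _ ⟨Empty, inferInstance, isEmptyElim, isEmptyElim,
      isEmptyElim, isEmptyElim, isEmptyElim, by ext; simp⟩)

theorem map_prod_add_dirac_absolutelyContinuous [SigmaFinite ν] (hη : IsPoissonPP P ν η) :
    (P.prod ν).map (fun q => η q.1 + Measure.dirac q.2) ≪ P.map η := by
  refine Measure.AbsolutelyContinuous.mk fun N hN hN0 => ?_
  rw [Measure.map_apply hη.measurable hN] at hN0
  rw [Measure.map_apply hη.measurable_add_dirac hN, ← sum_restrict_disjointed_spanningSets ν ν,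
    Measure.prod_sum_right, Measure.sum_apply _ (hη.measurable_add_dirac hN),
    ENNReal.tsum_eq_zero]
  intro n
  have hSn := MeasurableSet.disjointed (measurableSet_spanningSets ν) n
  have hνSn : ν (disjointed (spanningSets ν) n) ≠ ∞ :=
    ((measure_mono (disjointed_subset _ n)).trans_lt (measure_spanningSets_lt_top ν n)).ne
  rw [← Measure.map_apply hη.measurable_add_dirac hN, hη.map_prod_restrict_add_dirac hSn hνSn,
    Measure.map_apply hη.measurable hN]
  exact withDensity_absolutelyContinuous _ _ hN0

lemma ae_prod_add_dirac [SigmaFinite ν] (hη : IsPoissonPP P ν η) {p : Measure Z → Prop}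
    (hp : MeasurableSet {μ | p μ}) (h : ∀ᵐ ω ∂P, p (η ω)) :
    ∀ᵐ q ∂(P.prod ν), p (η q.1 + Measure.dirac q.2) :=
  ae_of_ae_map hη.measurable_add_dirac.aemeasurable
    (hη.map_prod_add_dirac_absolutelyContinuous.ae_le
      ((ae_map_iff hη.measurable.aemeasurable hp).2 h))

end IsPoissonPP

end StablePoisson

open StablePoisson in
/-- boundedness of the add-one operator for bounded functionals. -/
theorem addD_essentially_bounded
    {Ω : Type*} [MeasurableSpace Ω] {Z : Type*} [MeasurableSpace Z]
    (P : Measure Ω) [IsProbabilityMeasure P] (ν : Measure Z) [SigmaFinite ν]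
    (η : Ω → Measure Z) (hη : IsPoissonPP P ν η)
    (f : Measure Z → ℝ) (hf : Measurable f)
    (hbd : MemLp (fun ω => f (η ω)) ⊤ P) :
    MemLp (fun p : Ω × Z => addD f η p.1 p.2) ⊤ (P.prod ν) ∧
    (∀ t : ℝ, P {ω | t ≤ f (η ω)} = 0 →
      (P.prod ν) {p : Ω × Z | t ≤ f (η p.1) + addD f η p.1 p.2} = 0) ∧
    (∀ᵐ p ∂(P.prod ν),
      |addD f η p.1 p.2| ≤ 2 * (eLpNorm (fun ω => f (η ω)) ⊤ P).toReal) := by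
  set M := (eLpNorm (fun ω => f (η ω)) ⊤ P).toReal
  have hF : ∀ᵐ ω ∂P, |f (η ω)| ≤ M := by
    simpa [M, toReal_eLpNorm hbd.aestronglyMeasurable] using ae_le_lpNorm_exponent_top hbd
  have hF_add : ∀ᵐ q ∂(P.prod ν), |f (η q.1 + Measure.dirac q.2)| ≤ M :=
    hη.ae_prod_add_dirac (measurableSet_le hf.abs measurable_const) hF
  have hbound : ∀ᵐ q ∂(P.prod ν), |addD f η q.1 q.2| ≤ 2 * M := by
    filter_upwards [hF_add, Measure.quasiMeasurePreserving_fst.ae hF] with q h₁ h₂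
    calc |addD f η q.1 q.2| ≤ |f (η q.1 + Measure.dirac q.2)| + |f (η q.1)| := abs_sub _ _
      _ ≤ 2 * M := by linarith
  have hmeas : Measurable fun q : Ω × Z => addD f η q.1 q.2 :=
    (hf.comp hη.measurable_add_dirac).sub (hf.comp (hη.measurable.comp measurable_fst))
  refine ⟨memLp_top_of_bound hmeas.aestronglyMeasurable _ (by simpa using hbound),
    fun t ht => ?_, hbound⟩
  have hlt : ∀ᵐ ω ∂P, f (η ω) < t := by
    simpa [ae_iff] using ht
  simpa [ae_iff, addD] using hη.ae_prod_add_dirac (measurableSet_lt hf measurable_const) hlt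
end
end

section
/- Let A and B be integrable real random variables and let N, N′ be standard Gaussian random variables with N independent of A and N′ independent of B. Then d₁(A·N, B·N′) ≤ √(2/π)·d₁(A, B). -/
open MeasureTheory ProbabilityTheory Filter Real Topology

noncomputable section

/-! Conditioning on the mixing variable, `E φ(A N) = E Ψ(A)` with `Ψ(a) = E φ(a N)`. For
`φ` 1-Lipschitz, `|φ(a N) - φ(b N)| ≤ |a - b| |N|`, so `Ψ` is `E|N| = √(2/π)`-Lipschitz and
`E φ(A N) - E φ(B N') = E Ψ(A) - E Ψ(B) ≤ √(2/π) d₁(A, B)`. -/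

open Set NNReal

section Lipschitz

variable {α E F : Type*} [MeasurableSpace α] {μ : Measure α} [NormedAddCommGroup E]
  [NormedAddCommGroup F] {K : ℝ≥0} {φ : E → F}

lemma LipschitzWith.norm_le_norm_add_mul (hφ : LipschitzWith K φ) (x : E) :
    ‖φ x‖ ≤ ‖φ 0‖ + K * ‖x‖ := by
  have h := hφ.norm_sub_le x 0
  rw [sub_zero] at h
  linarith [norm_le_norm_sub_add (φ x) (φ 0)]

lemma LipschitzWith.integrable_comp [IsFiniteMeasure μ] (hφ : LipschitzWith K φ) {f : α → E}
    (hf : Integrable f μ) : Integrable (fun x => φ (f x)) μ :=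
  ((integrable_const ‖φ 0‖).add (hf.norm.const_mul K)).mono'
    (hφ.continuous.comp_aestronglyMeasurable hf.1)
    (ae_of_all _ fun x => hφ.norm_le_norm_add_mul (f x))

end Lipschitz

lemma LipschitzWith.abs_integral_comp_sub_le {Ω : Type*} [MeasurableSpace Ω] {P : Measure Ω}
    [IsProbabilityMeasure P] {X : Ω → ℝ} {K : ℝ≥0} {φ : ℝ → ℝ} (hφ : LipschitzWith K φ)
    (hX : Integrable X P) : |(∫ ω, φ (X ω) ∂P) - φ 0| ≤ K * ∫ ω, |X ω| ∂P := by
  rw [← integral_const_mul]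
  have hcenter : (∫ ω, φ (X ω) ∂P) - φ 0 = ∫ ω, (φ (X ω) - φ 0) ∂P := by
    rw [integral_sub (hφ.integrable_comp hX) (integrable_const _), integral_const]
    simp
  rw [hcenter, ← Real.norm_eq_abs]
  refine norm_integral_le_of_norm_le (hX.abs.const_mul _) (ae_of_all _ fun ω => ?_)
  simpa [sub_zero] using hφ.norm_sub_le (X ω) 0

lemma integral_Ioi_mul_exp_neg_mul_sq {b : ℝ} (hb : 0 < b) :
    ∫ x in Ioi (0 : ℝ), x * exp (-b * x ^ 2) = (2 * b)⁻¹ := by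
  apply Complex.ofReal_injective
  rw [← integral_complex_ofReal]
  push_cast
  exact integral_mul_cexp_neg_mul_sq (by simpa using hb)

lemma integral_abs_gaussianReal : ∫ x, |x| ∂gaussianReal 0 1 = √(2 / π) := by
  have h := integral_comp_abs (f := fun x => x * exp (-(1 / 2) * x ^ 2))
  simp only [sq_abs, integral_Ioi_mul_exp_neg_mul_sq (by norm_num : (0 : ℝ) < 1 / 2)] at h
  rw [integral_gaussianReal_eq_integral_smul one_ne_zero]
  simp only [gaussianPDFReal, smul_eq_mul, NNReal.coe_one, sub_zero]
  have e : ∀ x : ℝ, (√(2 * π * 1))⁻¹ * exp (-x ^ 2 / (2 * 1)) * |x|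
      = (√(2 * π))⁻¹ * (|x| * exp (-(1 / 2) * x ^ 2)) := fun x => by ring_nf
  simp only [e, integral_const_mul, h]
  rw [sqrt_div zero_le_two, sqrt_mul zero_le_two]
  have h2 : √2 * √2 = 2 := mul_self_sqrt zero_le_two
  field_simp
  linarith

lemma integrable_of_map_eq_gaussianReal {Ω : Type*} [MeasurableSpace Ω] {P : Measure Ω}
    {N : Ω → ℝ} {m : ℝ} {v : ℝ≥0} (hN : P.map N = gaussianReal m v) : Integrable N P := by
  have hNm : AEMeasurable N P := .of_map_ne_zero (hN ▸ IsProbabilityMeasure.ne_zero _)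
  refine (integrable_map_measure aestronglyMeasurable_id hNm).mp ?_
  rw [hN]
  exact (memLp_id_gaussianReal 1).integrable le_rfl

def scaleAverage (μ : Measure ℝ) (φ : ℝ → ℝ) (a : ℝ) : ℝ := ∫ x, φ (a * x) ∂μ

lemma lipschitzWith_scaleAverage {μ : Measure ℝ} [IsFiniteMeasure μ] {K : ℝ≥0} {φ : ℝ → ℝ}
    (hμ : Integrable (fun x => x) μ) (hφ : LipschitzWith K φ) :
    LipschitzWith (K * (∫ x, |x| ∂μ).toNNReal) (scaleAverage μ φ) := by
  refine LipschitzWith.of_dist_le_mul fun a b => ?_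
  have hint : ∀ c : ℝ, Integrable (fun x => φ (c * x)) μ :=
    fun c => hφ.integrable_comp (hμ.const_mul c)
  rw [NNReal.coe_mul, Real.coe_toNNReal _ (integral_nonneg fun x => abs_nonneg x), dist_eq_norm,
    scaleAverage, scaleAverage, ← integral_sub (hint a) (hint b)]
  calc ‖∫ x, (φ (a * x) - φ (b * x)) ∂μ‖ ≤ ∫ x, K * (|x| * dist a b) ∂μ := by
        refine norm_integral_le_of_norm_le ((hμ.abs.mul_const _).const_mul _)
          (ae_of_all _ fun x => ?_)
        have h := hφ.dist_le_mul (a * x) (b * x)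
        rwa [dist_eq_norm, dist_eq_norm, ← sub_mul, Real.norm_eq_abs (_ * x), abs_mul,
          mul_comm |a - b|, ← Real.dist_eq] at h
    _ = K * (∫ x, |x| ∂μ) * dist a b := by rw [integral_const_mul, integral_mul_const, mul_assoc]

lemma ProbabilityTheory.IndepFun.integral_comp_mul_eq_integral_scaleAverage {Ω : Type*} [MeasurableSpace Ω]
    {P : Measure Ω} [IsFiniteMeasure P] {A N : Ω → ℝ} {K : ℝ≥0} {φ : ℝ → ℝ}
    (hAN : IndepFun A N P) (hA : Integrable A P) (hN : Integrable N P)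
    (hφ : LipschitzWith K φ) :
    ∫ ω, φ (A ω * N ω) ∂P = ∫ ω, scaleAverage (P.map N) φ (A ω) ∂P := by
  have hlaw : P.map (fun ω => (A ω, N ω)) = (P.map A).prod (P.map N) :=
    (indepFun_iff_map_prod_eq_prod_map_map hA.aemeasurable hN.aemeasurable).mp hAN
  have hA' : Integrable (fun a => a) (P.map A) :=
    (integrable_map_measure aestronglyMeasurable_id hA.aemeasurable).mpr hA
  have hN' : Integrable (fun x => x) (P.map N) :=
    (integrable_map_measure aestronglyMeasurable_id hN.aemeasurable).mpr hN
  have hcont : Continuous fun p : ℝ × ℝ => φ (p.1 * p.2) :=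
    hφ.continuous.comp (continuous_fst.mul continuous_snd)
  calc ∫ ω, φ (A ω * N ω) ∂P = ∫ p, φ (p.1 * p.2) ∂(P.map fun ω => (A ω, N ω)) :=
        (integral_map (hA.aemeasurable.prodMk hN.aemeasurable) hcont.aestronglyMeasurable).symm
    _ = ∫ a, scaleAverage (P.map N) φ a ∂(P.map A) := by
        rw [hlaw]
        exact integral_prod _ (hφ.integrable_comp (hA'.mul_prod hN'))
    _ = ∫ ω, scaleAverage (P.map N) φ (A ω) ∂P :=
        integral_map hA.aemeasurable
          (lipschitzWith_scaleAverage hN' hφ).continuous.aestronglyMeasurable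

namespace StablePoisson

variable {Ω₁ Ω₂ : Type*} [MeasurableSpace Ω₁] [MeasurableSpace Ω₂] {P₁ : Measure Ω₁}
  {P₂ : Measure Ω₂} {X : Ω₁ → ℝ} {Y : Ω₂ → ℝ}

lemma dW1_le {c : ℝ}
    (h : ∀ φ : ℝ → ℝ, LipschitzWith 1 φ → (∫ ω, φ (X ω) ∂P₁) - ∫ ω, φ (Y ω) ∂P₂ ≤ c) :
    dW1 P₁ P₂ X Y ≤ c :=
  csSup_le ⟨_, fun _ => 0, (LipschitzWith.const 0).weaken zero_le_one, rfl⟩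
    (by rintro r ⟨φ, hφ, rfl⟩; exact h φ hφ)

variable [IsProbabilityMeasure P₁] [IsProbabilityMeasure P₂]

lemma bddAbove_dW1 (hX : Integrable X P₁) (hY : Integrable Y P₂) :
    BddAbove {r | ∃ φ : ℝ → ℝ, LipschitzWith 1 φ ∧
      r = (∫ ω, φ (X ω) ∂P₁) - ∫ ω, φ (Y ω) ∂P₂} := by
  refine ⟨(∫ ω, |X ω| ∂P₁) + ∫ ω, |Y ω| ∂P₂, ?_⟩
  rintro r ⟨φ, hφ, rfl⟩
  have hX' := abs_le.mp (hφ.abs_integral_comp_sub_le hX)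
  have hY' := abs_le.mp (hφ.abs_integral_comp_sub_le hY)
  push_cast at hX' hY'
  linarith [hX'.2, hY'.1]

lemma sub_le_mul_dW1 (hX : Integrable X P₁) (hY : Integrable Y P₂) {K : ℝ≥0} {ψ : ℝ → ℝ}
    (hψ : LipschitzWith K ψ) :
    (∫ ω, ψ (X ω) ∂P₁) - ∫ ω, ψ (Y ω) ∂P₂ ≤ K * dW1 P₁ P₂ X Y := by
  rcases eq_or_ne K 0 with rfl | hK
  · have hconst : ∀ x, ψ x = ψ 0 := fun x => dist_le_zero.mp (by simpa using hψ.dist_le_mul x 0)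
    simp [hconst]
  have hKpos : (0 : ℝ) < K := NNReal.coe_pos.mpr (pos_iff_ne_zero.mpr hK)
  have hψK : LipschitzWith 1 fun x => ψ x / K := LipschitzWith.of_dist_le_mul fun a b => by
    rw [NNReal.coe_one, one_mul, dist_eq_norm, ← _root_.sub_div, norm_div, Real.norm_of_nonneg hKpos.le,
      div_le_iff₀ hKpos, mul_comm, ← dist_eq_norm]
    exact hψ.dist_le_mul a b
  have h := le_csSup (bddAbove_dW1 hX hY) ⟨_, hψK, rfl⟩
  rwa [integral_div, integral_div, ← _root_.sub_div, div_le_iff₀' hKpos] at h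

end StablePoisson

open StablePoisson in
/-- contraction property of Gaussian mixtures in the
Monge–Kantorovich distance. -/
theorem gaussian_mixture_wasserstein_contraction
    {Ω₁ : Type*} [MeasurableSpace Ω₁] {Ω₂ : Type*} [MeasurableSpace Ω₂]
    (P₁ : Measure Ω₁) [IsProbabilityMeasure P₁]
    (P₂ : Measure Ω₂) [IsProbabilityMeasure P₂]
    (A N : Ω₁ → ℝ) (B N' : Ω₂ → ℝ)
    (hA : Integrable A P₁) (hB : Integrable B P₂)
    (hN : P₁.map N = gaussianReal 0 1) (hN' : P₂.map N' = gaussianReal 0 1)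
    (hAN : IndepFun A N P₁) (hBN : IndepFun B N' P₂) :
    dW1 P₁ P₂ (fun ω => A ω * N ω) (fun ω => B ω * N' ω) ≤
      Real.sqrt (2 / π) * dW1 P₁ P₂ A B := by
  have hgauss : Integrable (fun x => x) (gaussianReal 0 1) :=
    (memLp_id_gaussianReal 1).integrable le_rfl
  refine dW1_le fun φ hφ => ?_
  rw [hAN.integral_comp_mul_eq_integral_scaleAverage hA (integrable_of_map_eq_gaussianReal hN) hφ,
    hBN.integral_comp_mul_eq_integral_scaleAverage hB (integrable_of_map_eq_gaussianReal hN') hφ,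
    hN, hN']
  have h := sub_le_mul_dW1 hA hB (lipschitzWith_scaleAverage hgauss hφ)
  rwa [NNReal.coe_mul, NNReal.coe_one, one_mul, integral_abs_gaussianReal,
    Real.coe_toNNReal _ (sqrt_nonneg _)] at h
end
end
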